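/- Let 0 < α < n and let k be an integer with 1 < k < n/α. Set Φ_k(t) = t log(e+t)^{2k−1} and A_k(t) = t^k log(e+t)^{2k−1}, and let B be any Young function. Then for every weight u with M_{Φ_k, kα} u finite a.e., the pair (u, M_{Φ_k, kα} u) satisfies sup_Q |Q|^{α/n} ‖u^{1/k}‖_{A_k,Q} ‖(M_{Φ_k, kα} u)^{−1/k}‖_{B,Q} < ∞, the supremum over all cubes Q; that is, this pair satisfies the two-weight bump condition of the two-weight theorem for [b,I_α] (with p = q = k) with the exponent δ = 0 on the logarithm in A_k. -/

import Mathlib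

noncomputable section

open MeasureTheory Real Set Filter
open scoped ENNReal NNReal Topology

/-- `ℝⁿ` with the Euclidean norm. -/
abbrev Rn (n : ℕ) : Type := EuclideanSpace ℝ (Fin n)

namespace Paper

variable {n : ℕ}

/-- The axis-parallel closed cube with lower corner `c` and side length `h`;
its volume is `h ^ n`. -/
def Cube (c : Rn n) (h : ℝ) : Set (Rn n) := {x | ∀ i, c i ≤ x i ∧ x i ≤ c i + h}

/-- Mean value of `f` over the cube with lower corner `c` and side length `h`. -/
def cubeAvg (c : Rn n) (h : ℝ) (f : Rn n → ℝ) : ℝ := (1 / h ^ n) * ∫ x in Cube c h, f x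

/-- The BMO norm of `b` : the supremum over all cubes of the mean oscillation. -/
def bmoNorm (b : Rn n → ℝ) : ℝ≥0∞ :=
  ⨆ (c : Rn n) (h : ℝ) (_ : 0 < h),
    ENNReal.ofReal (cubeAvg c h fun x => |b x - cubeAvg c h b|)

/-- Normalized Luxemburg norm of `f` with respect to the Young function `Φ`
over a set `Q` of measure `vol`. -/
def luxNormOn (Φ : ℝ → ℝ) (Q : Set (Rn n)) (vol : ℝ) (f : Rn n → ℝ) : ℝ :=
  sInf {lam : ℝ | 0 < lam ∧ (1 / vol) * ∫ x in Q, Φ (|f x| / lam) ≤ 1}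

/-- Normalized Luxemburg norm over the cube with corner `c` and side `h`. -/
def luxNorm (Φ : ℝ → ℝ) (c : Rn n) (h : ℝ) (f : Rn n → ℝ) : ℝ :=
  luxNormOn Φ (Cube c h) (h ^ n) f

/-- `(∫ |f|^p w)^(1/p)`, the norm of `f` in `L^p(w)`, as an extended real. -/
def wLpNorm (p : ℝ) (w : Rn n → ℝ) (f : Rn n → ℝ) : ℝ≥0∞ :=
  (∫⁻ x, ENNReal.ofReal (|f x| ^ p * w x)) ^ (1 / p)

/-- The unweighted `L^p` norm. -/
def lpNorm (p : ℝ) (f : Rn n → ℝ) : ℝ≥0∞ :=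
  (∫⁻ x, ENNReal.ofReal (|f x| ^ p)) ^ (1 / p)

/-- The commutator `[b,T] f = b · Tf − T(bf)`. -/
def commutator (b : Rn n → ℝ) (T : (Rn n → ℝ) → Rn n → ℝ) (f : Rn n → ℝ) (x : Rn n) : ℝ :=
  b x * T f x - T (fun y => b y * f y) x

/-- The fractional integral `I_α f(x) = ∫ f(y) |x−y|^{α−n} dy`. -/
def fracInt (α : ℝ) (f : Rn n → ℝ) (x : Rn n) : ℝ :=
  ∫ y, f y / ‖x - y‖ ^ ((n : ℝ) - α)

/-- The fractional integral of a nonnegative function, with values in `[0,∞]`. -/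
def fracIntL (α : ℝ) (f : Rn n → ℝ) (x : Rn n) : ℝ≥0∞ :=
  ∫⁻ y, ENNReal.ofReal (f y) * ENNReal.ofReal (‖x - y‖ ^ (α - (n : ℝ)))

/-- The `A_{p,q}` constant of a weight `w` (with the usual modification for `p = 1`). -/
def apqConst (p q : ℝ) (w : Rn n → ℝ) : ℝ≥0∞ :=
  if p = 1 then
    ⨆ (c : Rn n) (h : ℝ) (_ : 0 < h),
      ENNReal.ofReal (cubeAvg c h fun x => w x ^ q) *
        (essSup (fun x => ENNReal.ofReal ((w x)⁻¹)) (volume.restrict (Cube c h))) ^ q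
  else
    ⨆ (c : Rn n) (h : ℝ) (_ : 0 < h),
      ENNReal.ofReal ((cubeAvg c h fun x => w x ^ q) *
        (cubeAvg c h fun x => w x ^ (-(p / (p - 1)))) ^ (q / (p / (p - 1))))

/-- The dyadic cube `2^k (m + [0,1)^n)`. -/
def dyadicCube (k : ℤ) (m : Fin n → ℤ) : Set (Rn n) :=
  {x | ∀ i, (2 : ℝ) ^ k * (m i : ℝ) ≤ x i ∧ x i < (2 : ℝ) ^ k * ((m i : ℝ) + 1)}

/-- A dyadic singular integral operator of order `τ`:
`T f = Σ_{Q ∈ 𝒟} ⟨f, h_Q⟩ g_Q` where `h_Q, g_Q` are supported on `Q`, constant on dyadic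
subcubes of `Q` of measure at most `2^{-τ n} |Q|`, bounded by `|Q|^{-1/2}`, and have mean zero. -/
structure DyadicSIO (n : ℕ) (τ : ℕ) where
  hQ : ℤ → (Fin n → ℤ) → Rn n → ℝ
  gQ : ℤ → (Fin n → ℤ) → Rn n → ℝ
  supp_hQ : ∀ k m x, x ∉ dyadicCube k m → hQ k m x = 0
  supp_gQ : ∀ k m x, x ∉ dyadicCube k m → gQ k m x = 0
  const_hQ : ∀ k m k' m', dyadicCube (n := n) k' m' ⊆ dyadicCube k m → k' ≤ k - τ →
    ∀ x ∈ dyadicCube (n := n) k' m', ∀ y ∈ dyadicCube (n := n) k' m', hQ k m x = hQ k m y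
  const_gQ : ∀ k m k' m', dyadicCube (n := n) k' m' ⊆ dyadicCube k m → k' ≤ k - τ →
    ∀ x ∈ dyadicCube (n := n) k' m', ∀ y ∈ dyadicCube (n := n) k' m', gQ k m x = gQ k m y
  bound_hQ : ∀ k m x, |hQ k m x| ≤ (Real.sqrt (((2 : ℝ) ^ k) ^ n))⁻¹
  bound_gQ : ∀ k m x, |gQ k m x| ≤ (Real.sqrt (((2 : ℝ) ^ k) ^ n))⁻¹
  mean_hQ : ∀ k m, ∫ x in dyadicCube (n := n) k m, hQ k m x = 0
  mean_gQ : ∀ k m, ∫ x in dyadicCube (n := n) k m, gQ k m x = 0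

/-- The action of a dyadic singular integral operator. -/
def DyadicSIO.apply {τ : ℕ} (T : DyadicSIO n τ) (f : Rn n → ℝ) (x : Rn n) : ℝ :=
  ∑' (k : ℤ) (m : Fin n → ℤ), (∫ y, f y * T.hQ k m y) * T.gQ k m x

/-- The truncation of a dyadic singular integral operator to cubes of measure `≥ 2^{nl}`. -/
def DyadicSIO.trunc {τ : ℕ} (T : DyadicSIO n τ) (l : ℤ) (f : Rn n → ℝ) (x : Rn n) : ℝ :=
  ∑' (k : ℤ) (m : Fin n → ℤ),
    if l ≤ k then (∫ y, f y * T.hQ k m y) * T.gQ k m x else 0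

/-- The maximal truncated dyadic singular integral operator. -/
def DyadicSIO.star {τ : ℕ} (T : DyadicSIO n τ) (f : Rn n → ℝ) (x : Rn n) : ℝ≥0∞ :=
  ⨆ l : ℤ, ENNReal.ofReal |T.trunc l f x|

/-- The Hardy–Littlewood maximal operator (over axis-parallel cubes). -/
def maxOp (f : Rn n → ℝ) (x : Rn n) : ℝ :=
  sSup {r : ℝ | ∃ c h, 0 < h ∧ x ∈ Cube c h ∧ r = cubeAvg c h fun y => |f y|}

/-- The fractional maximal operator `M_β`. -/
def fracMaxOp (β : ℝ) (f : Rn n → ℝ) (x : Rn n) : ℝ :=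
  sSup {r : ℝ | ∃ c h, 0 < h ∧ x ∈ Cube c h ∧
    r = (h ^ n) ^ (β / (n : ℝ)) * cubeAvg c h fun y => |f y|}

/-- The Orlicz maximal operator `M_Φ`. -/
def orliczMax (Φ : ℝ → ℝ) (f : Rn n → ℝ) (x : Rn n) : ℝ≥0∞ :=
  ⨆ (c : Rn n) (h : ℝ) (_ : 0 < h) (_ : x ∈ Cube c h), ENNReal.ofReal (luxNorm Φ c h f)

/-- The fractional Orlicz maximal operator `M_{Φ,β}`. -/
def fracOrliczMax (β : ℝ) (Φ : ℝ → ℝ) (f : Rn n → ℝ) (x : Rn n) : ℝ≥0∞ :=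
  ⨆ (c : Rn n) (h : ℝ) (_ : 0 < h) (_ : x ∈ Cube c h),
    ENNReal.ofReal ((h ^ n) ^ (β / (n : ℝ)) * luxNorm Φ c h f)

/-- The dyadic Hardy–Littlewood maximal operator. -/
def dyadMax (f : Rn n → ℝ) (x : Rn n) : ℝ≥0∞ :=
  ⨆ (k : ℤ) (m : Fin n → ℤ) (_ : x ∈ dyadicCube k m),
    ENNReal.ofReal ((1 / ((2 : ℝ) ^ k) ^ n) * ∫ y in dyadicCube (n := n) k m, |f y|)

/-- The Young function `t ↦ t log(e+t)`. -/
def LlogL (t : ℝ) : ℝ := t * Real.log (Real.exp 1 + t)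

/-- The dyadic `L log L` maximal operator. -/
def dyadMaxLlogL (f : Rn n → ℝ) (x : Rn n) : ℝ≥0∞ :=
  ⨆ (k : ℤ) (m : Fin n → ℤ) (_ : x ∈ dyadicCube k m),
    ENNReal.ofReal (luxNormOn LlogL (dyadicCube k m) (((2 : ℝ) ^ k) ^ n) f)

/-- The decreasing rearrangement `g^*(t) = inf { s > 0 : |{ |g| > s }| ≤ t }`. -/
def rearr (g : Rn n → ℝ) (t : ℝ) : ℝ :=
  sInf {s : ℝ | 0 < s ∧ volume {x | s < |g x|} ≤ ENNReal.ofReal t}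

/-- The local mean oscillation `ω_λ(f; Q) = inf_c ((f−c) χ_Q)^*(λ |Q|)`,
where `vol` is the measure of `Q`. -/
def oscLoc (lam : ℝ) (f : Rn n → ℝ) (Q : Set (Rn n)) (vol : ℝ) : ℝ :=
  sInf {r : ℝ | ∃ c₀ : ℝ, r = rearr (Q.indicator fun x => f x - c₀) (lam * vol)}

/-- The local dyadic sharp maximal function `M^{♯,d}_{λ,Q}` relative to the
dyadic cube indexed by `(k, m)`. -/
def dyadSharpMax (lam : ℝ) (k : ℤ) (m : Fin n → ℤ) (f : Rn n → ℝ) (x : Rn n) : ℝ≥0∞ :=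
  ⨆ (k' : ℤ) (m' : Fin n → ℤ) (_ : x ∈ dyadicCube k' m')
      (_ : dyadicCube (n := n) k' m' ⊆ dyadicCube k m),
    ENNReal.ofReal (oscLoc lam f (dyadicCube k' m') (((2 : ℝ) ^ k') ^ n))

/-- A Young function: continuous, convex, strictly increasing on `[0,∞)`,
vanishing at `0`, and superlinear at infinity. -/
def IsYoung (Φ : ℝ → ℝ) : Prop :=
  ContinuousOn Φ (Ici 0) ∧ ConvexOn ℝ (Ici 0) Φ ∧ StrictMonoOn Φ (Ici 0) ∧
    Φ 0 = 0 ∧ Tendsto (fun t => Φ t / t) atTop atTop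

/-- The surface measure of the unit sphere `𝕊^{n-1}` in `ℝⁿ`. -/
def sphereArea (n : ℕ) : ℝ := n * (volume (Metric.ball (0 : Rn n) 1)).toReal

/-- The associate Young function `Φ̄(t) = sup_{s > 0} (s t − Φ(s))`. -/
def assocFn (Φ : ℝ → ℝ) (t : ℝ) : ℝ := sSup {r : ℝ | ∃ s, 0 < s ∧ r = s * t - Φ s}

/-- The generalized inverse `Φ^{-1}(t) = inf { s ≥ 0 : Φ(s) ≥ t }`. -/
def genInv (Φ : ℝ → ℝ) (t : ℝ) : ℝ := sInf {s : ℝ | 0 ≤ s ∧ t ≤ Φ s}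

/-- A Calderón–Zygmund operator on `ℝⁿ`. -/
structure CZO (n : ℕ) where
  T : (Rn n → ℝ) → Rn n → ℝ
  K : Rn n → Rn n → ℝ
  C₀ : ℝ
  ε : ℝ
  C₂ : ℝ
  C₀_pos : 0 < C₀
  ε_pos : 0 < ε
  ε_le_one : ε ≤ 1
  map_add : ∀ f g : Rn n → ℝ, T (f + g) = T f + T g
  map_smul : ∀ (a : ℝ) (f : Rn n → ℝ), T (a • f) = a • T f
  l2_bound : ∀ f : Rn n → ℝ, MemLp f 2 volume →
    eLpNorm (T f) 2 volume ≤ ENNReal.ofReal C₂ * eLpNorm f 2 volume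
  size : ∀ x y : Rn n, x ≠ y → |K x y| ≤ C₀ * ‖x - y‖ ^ (-(n : ℝ))
  smooth : ∀ x x' y : Rn n, x ≠ y → x' ≠ y → ‖x - x'‖ ≤ ‖x - y‖ / 2 →
    |K x y - K x' y| + |K y x - K y x'| ≤ C₀ * ‖x - x'‖ ^ ε * ‖x - y‖ ^ (-(n : ℝ) - ε)
  repr : ∀ f : Rn n → ℝ, (∃ M, ∀ x, |f x| ≤ M) → HasCompactSupport f →
    ∀ᵐ x, x ∉ tsupport f → T f x = ∫ y, K x y * f y

end Paper

/-!
With `p = 2k - 1`, the Young functions `A_k((s/2^p)^{1/k})` and `Φ_k(s)` agree up to constant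
factors, which gives `‖u^{1/k}‖_{A_k,Q} ≤ C ‖u‖_{Φ_k,Q}^{1/k}`. Every point of `Q` sees `Q` in the
supremum defining `M = M_{Φ_k,kα} u`, so `M ≥ |Q|^{kα/n} ‖u‖_{Φ_k,Q}` on `Q`. Hence `M^{-1/k}` is
bounded on `Q` by `(|Q|^{α/n} ‖u‖_{Φ_k,Q}^{1/k})⁻¹`, and its `B`-norm by that bound divided by `δ`,
where `B ≤ 1` on `[0, δ]`. The product in the bump condition is therefore at most `C / δ`.
-/

namespace Paper

section LogBump

/-- In the paper's notation `Φ_k = LlogLPow (2k-1)` and `A_k = LrLogLPow k (2k-1)`. -/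
def LlogLPow (p t : ℝ) : ℝ := t * Real.log (Real.exp 1 + t) ^ p

def LrLogLPow (r p t : ℝ) : ℝ := t ^ r * Real.log (Real.exp 1 + t) ^ p

theorem measurable_LlogLPow (p : ℝ) : Measurable (LlogLPow p) := by
  unfold LlogLPow; fun_prop

theorem measurable_LrLogLPow (r p : ℝ) : Measurable (LrLogLPow r p) := by
  unfold LrLogLPow; fun_prop

variable {p t : ℝ}

theorem one_le_log_exp_add (ht : 0 ≤ t) : 1 ≤ Real.log (Real.exp 1 + t) := by
  rw [Real.le_log_iff_exp_le (by positivity)]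
  linarith

theorem log_exp_add_nonneg (ht : 0 ≤ t) : 0 ≤ Real.log (Real.exp 1 + t) :=
  zero_le_one.trans (one_le_log_exp_add ht)

theorem log_exp_add_le_mul_log_exp_add_div {M : ℝ} (hM : 1 ≤ M) (ht : 0 ≤ t) :
    Real.log (Real.exp 1 + t) ≤ (1 + Real.log M) * Real.log (Real.exp 1 + t / M) := by
  have hM0 : 0 < M := by linarith
  have hle : Real.exp 1 + t ≤ M * (Real.exp 1 + t / M) := by
    rw [mul_add, mul_div_cancel₀ _ hM0.ne']
    nlinarith [Real.exp_pos 1]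
  have h1 := one_le_log_exp_add (div_nonneg ht hM0.le)
  have h2 := Real.log_nonneg hM
  calc Real.log (Real.exp 1 + t) ≤ Real.log (M * (Real.exp 1 + t / M)) :=
        Real.log_le_log (by positivity) hle
    _ = Real.log M + Real.log (Real.exp 1 + t / M) := Real.log_mul hM0.ne' (by positivity)
    _ ≤ (1 + Real.log M) * Real.log (Real.exp 1 + t / M) := by nlinarith

theorem log_exp_add_le_mul_log_exp_add_rpow_inv {k : ℕ} (hk : k ≠ 0) (ht : 0 ≤ t) :
    Real.log (Real.exp 1 + t) ≤ k * Real.log (Real.exp 1 + t ^ (1 / (k : ℝ))) := by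
  have hroot : (t ^ (1 / (k : ℝ))) ^ k = t := by
    rw [one_div, Real.rpow_inv_natCast_pow ht hk]
  have hle : Real.exp 1 + t ≤ (Real.exp 1 + t ^ (1 / (k : ℝ))) ^ k := by
    have := pow_add_pow_le (Real.exp_pos 1).le (Real.rpow_nonneg ht (1 / (k : ℝ))) hk
    have := le_self_pow₀ (Real.one_le_exp zero_le_one) hk
    linarith
  calc Real.log (Real.exp 1 + t) ≤ Real.log ((Real.exp 1 + t ^ (1 / (k : ℝ))) ^ k) :=
        Real.log_le_log (by positivity) hle
    _ = k * Real.log (Real.exp 1 + t ^ (1 / (k : ℝ))) := Real.log_pow _ _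

theorem log_exp_add_rpow_le_two_mul {a : ℝ} (ha₀ : 0 ≤ a) (ha₁ : a ≤ 1) (ht : 0 ≤ t) :
    Real.log (Real.exp 1 + t ^ a) ≤ 2 * Real.log (Real.exp 1 + t) := by
  have hta : t ^ a ≤ 1 + t := by
    rcases le_total t 1 with h | h
    · linarith [Real.rpow_le_one ht h ha₀]
    · linarith [Real.rpow_le_self_of_one_le h ha₁]
  have hle : Real.exp 1 + t ^ a ≤ Real.exp 1 * (Real.exp 1 + t) := by
    nlinarith [Real.add_one_le_exp 1]
  calc Real.log (Real.exp 1 + t ^ a) ≤ Real.log (Real.exp 1 * (Real.exp 1 + t)) :=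
        Real.log_le_log (by positivity) hle
    _ = 1 + Real.log (Real.exp 1 + t) := by
        rw [Real.log_mul (Real.exp_ne_zero 1) (by positivity), Real.log_exp]
    _ ≤ 2 * Real.log (Real.exp 1 + t) := by linarith [one_le_log_exp_add ht]

theorem LlogLPow_nonneg (ht : 0 ≤ t) : 0 ≤ LlogLPow p t :=
  mul_nonneg ht (Real.rpow_nonneg (log_exp_add_nonneg ht) p)

theorem LrLogLPow_nonneg {r : ℝ} (ht : 0 ≤ t) : 0 ≤ LrLogLPow r p t :=
  mul_nonneg (Real.rpow_nonneg ht r) (Real.rpow_nonneg (log_exp_add_nonneg ht) p)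

variable {k : ℕ} {w : ℝ}

theorem LrLogLPow_rpow_inv (hk : k ≠ 0) (ht : 0 ≤ t) :
    LrLogLPow k p (t ^ (1 / (k : ℝ))) = t * Real.log (Real.exp 1 + t ^ (1 / (k : ℝ))) ^ p := by
  rw [LrLogLPow, ← Real.rpow_mul ht, one_div, inv_mul_cancel₀ (by exact_mod_cast hk),
    Real.rpow_one]

theorem LrLogLPow_rpow_inv_div_le (hp : 0 ≤ p) (hk : k ≠ 0) (hw : 0 ≤ w) :
    LrLogLPow k p ((w / 2 ^ p) ^ (1 / (k : ℝ))) ≤ LlogLPow p w := by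
  have hs : 0 ≤ w / 2 ^ p := by positivity
  have hlog : Real.log (Real.exp 1 + (w / 2 ^ p) ^ (1 / (k : ℝ)))
      ≤ 2 * Real.log (Real.exp 1 + w) := calc
    _ ≤ 2 * Real.log (Real.exp 1 + w / 2 ^ p) :=
      log_exp_add_rpow_le_two_mul (by positivity)
        (div_le_one_of_le₀ (by exact_mod_cast Nat.one_le_iff_ne_zero.mpr hk) (by positivity)) hs
    _ ≤ 2 * Real.log (Real.exp 1 + w) := by
      gcongr
      exact div_le_self hw (Real.one_le_rpow one_le_two hp)
  rw [LrLogLPow_rpow_inv hk hs, LlogLPow]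
  calc w / 2 ^ p * Real.log (Real.exp 1 + (w / 2 ^ p) ^ (1 / (k : ℝ))) ^ p
      ≤ w / 2 ^ p * (2 * Real.log (Real.exp 1 + w)) ^ p := by
        gcongr
        exact log_exp_add_nonneg (by positivity)
    _ = w * Real.log (Real.exp 1 + w) ^ p := by
        rw [Real.mul_rpow zero_le_two (log_exp_add_nonneg hw)]
        field_simp

theorem LlogLPow_le_mul_LrLogLPow_rpow_inv (hp : 0 ≤ p) (hk : k ≠ 0) {M : ℝ} (hM : 1 ≤ M)
    (hw : 0 ≤ w) :
    LlogLPow p w ≤ M * (k * (1 + Real.log M)) ^ p * LrLogLPow k p ((w / M) ^ (1 / (k : ℝ))) := by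
  have hM0 : 0 < M := by linarith
  have hs : 0 ≤ w / M := div_nonneg hw hM0.le
  have hlog : Real.log (Real.exp 1 + w)
      ≤ k * (1 + Real.log M) * Real.log (Real.exp 1 + (w / M) ^ (1 / (k : ℝ))) := by
    have h1 := log_exp_add_le_mul_log_exp_add_div hM hw
    have h2 := log_exp_add_le_mul_log_exp_add_rpow_inv hk hs
    have h3 : 0 ≤ 1 + Real.log M := by linarith [Real.log_nonneg hM]
    nlinarith
  rw [LrLogLPow_rpow_inv hk hs, LlogLPow]
  calc w * Real.log (Real.exp 1 + w) ^ p
      ≤ w * (k * (1 + Real.log M) * Real.log (Real.exp 1 + (w / M) ^ (1 / (k : ℝ)))) ^ p := by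
        gcongr
        exact log_exp_add_nonneg hw
    _ = M * (k * (1 + Real.log M)) ^ p *
          (w / M * Real.log (Real.exp 1 + (w / M) ^ (1 / (k : ℝ))) ^ p) := by
        rw [Real.mul_rpow (by positivity [Real.log_nonneg hM])
          (log_exp_add_nonneg (by positivity))]
        field_simp

theorem LlogLPow_le_mul_LlogLPow_div (hp : 0 ≤ p) {K : ℝ} (hK : 1 ≤ K) (hw : 0 ≤ w) :
    LlogLPow p w ≤ K * (1 + Real.log K) ^ p * LlogLPow p (w / K) := by
  simpa [LrLogLPow, LlogLPow] using
    LlogLPow_le_mul_LrLogLPow_rpow_inv hp one_ne_zero hK hw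

theorem LlogLPow_div_le (hp : 0 ≤ p) {K : ℝ} (hK : 1 ≤ K) (hw : 0 ≤ w) :
    LlogLPow p (w / K) ≤ LlogLPow p w / K := by
  have hK0 : 0 < K := by linarith
  rw [LlogLPow, LlogLPow, div_mul_eq_mul_div]
  gcongr
  · exact log_exp_add_nonneg (div_nonneg hw hK0.le)
  · exact div_le_self hw hK

end LogBump

section Luxemburg

variable {n : ℕ} {Q : Set (Rn n)} {vol : ℝ}

def luxSet (Φ : ℝ → ℝ) (Q : Set (Rn n)) (vol : ℝ) (f : Rn n → ℝ) : Set ℝ :=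
  {lam | 0 < lam ∧ (1 / vol) * ∫ x in Q, Φ (|f x| / lam) ≤ 1}

variable {Φ Ψ : ℝ → ℝ} {f g : Rn n → ℝ}

theorem luxNormOn_eq_sInf : luxNormOn Φ Q vol f = sInf (luxSet Φ Q vol f) := rfl

theorem luxNormOn_nonneg : 0 ≤ luxNormOn Φ Q vol f :=
  Real.sInf_nonneg fun _ hlam => hlam.1.le

theorem luxNormOn_le {lam : ℝ} (hlam : lam ∈ luxSet Φ Q vol f) : luxNormOn Φ Q vol f ≤ lam :=
  csInf_le ⟨0, fun _ hl => hl.1.le⟩ hlam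

/-- With junk value `0` for non-integrable functions, `F ≤ G` alone would not suffice. -/
theorem integral_mono_of_le_mul {α : Type*} [MeasurableSpace α] {μ : Measure α}
    {F G : α → ℝ} {K : ℝ} (hG : AEStronglyMeasurable G μ) (hF : ∀ x, 0 ≤ F x)
    (hFG : ∀ x, F x ≤ G x) (hGF : ∀ x, G x ≤ K * F x) : ∫ x, F x ∂μ ≤ ∫ x, G x ∂μ := by
  by_cases hFi : Integrable F μ
  · have hGi : Integrable G μ := hFi.const_mul K |>.mono' hG <| ae_of_all _ fun x => by
      rw [Real.norm_eq_abs, abs_of_nonneg ((hF x).trans (hFG x))]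
      exact hGF x
    exact integral_mono hFi hGi hFG
  · rw [integral_undef hFi]
    exact integral_nonneg fun x => (hF x).trans (hFG x)

theorem mem_luxSet_of_le_of_le_mul (hvol : 0 ≤ vol) {lam lam' K : ℝ} (hlam' : 0 < lam')
    (hG : AEStronglyMeasurable (fun x => Ψ (|g x| / lam)) (volume.restrict Q))
    (hF : ∀ x, 0 ≤ Φ (|f x| / lam')) (hFG : ∀ x, Φ (|f x| / lam') ≤ Ψ (|g x| / lam))
    (hGF : ∀ x, Ψ (|g x| / lam) ≤ K * Φ (|f x| / lam')) (hlam : lam ∈ luxSet Ψ Q vol g) :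
    lam' ∈ luxSet Φ Q vol f :=
  ⟨hlam', (mul_le_mul_of_nonneg_left (integral_mono_of_le_mul hG hF hFG hGF)
    (by positivity)).trans hlam.2⟩

variable {p : ℝ} {k : ℕ} {u : Rn n → ℝ}

theorem mem_luxSet_LrLogLPow_rpow_inv (hvol : 0 ≤ vol) (hp : 0 ≤ p) (hk : k ≠ 0)
    (hu : ∀ x, 0 ≤ u x) (humeas : AEMeasurable u (volume.restrict Q)) {lam : ℝ}
    (hlam : lam ∈ luxSet (LlogLPow p) Q vol u) :
    (2 ^ p) ^ (1 / (k : ℝ)) * lam ^ (1 / (k : ℝ)) ∈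
      luxSet (LrLogLPow k p) Q vol (fun x => u x ^ (1 / (k : ℝ))) := by
  have hlam0 : 0 < lam := hlam.1
  have harg : ∀ x, |u x ^ (1 / (k : ℝ))| / ((2 ^ p) ^ (1 / (k : ℝ)) * lam ^ (1 / (k : ℝ)))
      = (|u x| / lam / 2 ^ p) ^ (1 / (k : ℝ)) := fun x => by
    rw [abs_of_nonneg (hu x), abs_of_nonneg (Real.rpow_nonneg (hu x) _),
      ← Real.mul_rpow (by positivity) hlam0.le, ← Real.div_rpow (hu x) (by positivity),
      div_div, mul_comm]
  refine mem_luxSet_of_le_of_le_mul hvol (K := 2 ^ p * (k * (1 + Real.log (2 ^ p))) ^ p)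
    (by positivity)
    ((measurable_LlogLPow p).comp_aemeasurable (humeas.abs.div_const lam)).aestronglyMeasurable
    (fun x => LrLogLPow_nonneg (by positivity)) (fun x => ?_) (fun x => ?_) hlam
  · rw [harg]
    exact LrLogLPow_rpow_inv_div_le hp hk (by positivity)
  · rw [harg]
    exact LlogLPow_le_mul_LrLogLPow_rpow_inv hp hk (Real.one_le_rpow one_le_two hp)
      (by positivity)

theorem luxSet_LlogLPow_nonempty (hvol : 0 ≤ vol) (hp : 0 ≤ p) (hk : k ≠ 0)
    (hu : ∀ x, 0 ≤ u x) (humeas : AEMeasurable u (volume.restrict Q))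
    (hne : (luxSet (LrLogLPow k p) Q vol (fun x => u x ^ (1 / (k : ℝ)))).Nonempty) :
    (luxSet (LlogLPow p) Q vol u).Nonempty := by
  obtain ⟨lam, hlam⟩ := hne
  have hlam0 : 0 < lam := hlam.1
  have hM : (1 : ℝ) ≤ 2 ^ p := Real.one_le_rpow one_le_two hp
  set K : ℝ := 2 ^ p * (k * (1 + Real.log (2 ^ p))) ^ p
  have hK : 1 ≤ K := by
    have : 1 ≤ (k : ℝ) := by exact_mod_cast Nat.one_le_iff_ne_zero.mpr hk
    have : 1 ≤ (k : ℝ) * (1 + Real.log (2 ^ p)) := by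
      nlinarith [Real.log_nonneg hM]
    exact one_le_mul_of_one_le_of_one_le hM (Real.one_le_rpow this hp)
  set w : Rn n → ℝ := fun x => 2 ^ p * |u x| / lam ^ (k : ℝ)
  have hw : ∀ x, 0 ≤ w x := fun x => by positivity
  have hargΦ : ∀ x, |u x| / (K * lam ^ (k : ℝ) / 2 ^ p) = w x / K := fun x => by
    simp only [w]
    field_simp
  have hargA : ∀ x, |u x ^ (1 / (k : ℝ))| / lam = (w x / 2 ^ p) ^ (1 / (k : ℝ)) := fun x => by
    have : w x / 2 ^ p = |u x| / lam ^ (k : ℝ) := by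
      simp only [w]
      field_simp
    rw [this, Real.div_rpow (abs_nonneg _) (by positivity), ← Real.rpow_mul hlam0.le,
      mul_one_div_cancel (by exact_mod_cast hk), Real.rpow_one, abs_of_nonneg (hu x),
      abs_of_nonneg (Real.rpow_nonneg (hu x) _)]
  -- Dividing by `K` absorbs the constant of `Φ_k ≤ K A_k`, since `Φ_k(w/K) ≤ Φ_k(w)/K`.
  refine ⟨K * lam ^ (k : ℝ) / 2 ^ p,
    mem_luxSet_of_le_of_le_mul hvol (K := K * (1 + Real.log K) ^ p)
    (div_pos (mul_pos (by linarith) (by positivity)) (by positivity))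
    ((measurable_LrLogLPow k p).comp_aemeasurable
      ((humeas.pow_const _).abs.div_const lam)).aestronglyMeasurable
    (fun x => LlogLPow_nonneg (by positivity)) (fun x => ?_) (fun x => ?_) hlam⟩
  · rw [hargΦ, hargA]
    calc LlogLPow p (w x / K) ≤ LlogLPow p (w x) / K := LlogLPow_div_le hp hK (hw x)
      _ ≤ LrLogLPow k p ((w x / 2 ^ p) ^ (1 / (k : ℝ))) := by
        rw [div_le_iff₀ (by linarith), mul_comm]
        exact LlogLPow_le_mul_LrLogLPow_rpow_inv hp hk hM (hw x)
  · rw [hargΦ, hargA]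
    exact (LrLogLPow_rpow_inv_div_le hp hk (hw x)).trans
      (LlogLPow_le_mul_LlogLPow_div hp hK (hw x))

theorem luxNormOn_LrLogLPow_rpow_inv_le (hvol : 0 ≤ vol) (hp : 0 ≤ p) (hk : k ≠ 0)
    (hu : ∀ x, 0 ≤ u x) (humeas : AEMeasurable u (volume.restrict Q)) :
    luxNormOn (LrLogLPow k p) Q vol (fun x => u x ^ (1 / (k : ℝ))) ≤
      (2 ^ p) ^ (1 / (k : ℝ)) * luxNormOn (LlogLPow p) Q vol u ^ (1 / (k : ℝ)) := by
  have hk0 : (0 : ℝ) < k := by exact_mod_cast Nat.pos_of_ne_zero hk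
  have hC : (0 : ℝ) < (2 ^ p) ^ (1 / (k : ℝ)) := by positivity
  rcases (luxSet (LlogLPow p) Q vol u).eq_empty_or_nonempty with hempty | hne
  · have hempty' : luxSet (LrLogLPow k p) Q vol (fun x => u x ^ (1 / (k : ℝ))) = ∅ := by
      by_contra h
      exact (luxSet_LlogLPow_nonempty hvol hp hk hu humeas
        (Set.nonempty_iff_ne_empty.mpr h)).ne_empty hempty
    -- `sInf ∅ = 0`, which is why the empty case needs `luxSet_LlogLPow_nonempty`.
    rw [luxNormOn_eq_sInf, hempty', Real.sInf_empty]
    exact mul_nonneg hC.le (Real.rpow_nonneg luxNormOn_nonneg _)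
  · have hroot : ∀ {a b : ℝ}, 0 ≤ a → 0 ≤ b → (a ≤ b ^ (1 / (k : ℝ)) ↔ a ^ (k : ℝ) ≤ b) :=
      fun ha hb => by rw [one_div]; exact Real.le_rpow_inv_iff_of_pos ha hb hk0
    have hL : 0 ≤ luxNormOn (LrLogLPow k p) Q vol (fun x => u x ^ (1 / (k : ℝ))) /
        (2 ^ p) ^ (1 / (k : ℝ)) := div_nonneg luxNormOn_nonneg hC.le
    rw [← div_le_iff₀' hC, hroot hL luxNormOn_nonneg]
    refine le_csInf hne fun lam hlam => ?_
    rw [← hroot hL hlam.1.le, div_le_iff₀' hC]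
    exact luxNormOn_le (mem_luxSet_LrLogLPow_rpow_inv hvol hp hk hu humeas hlam)

end Luxemburg

section Cube

variable {n : ℕ}

theorem cube_eq_preimage (c : Rn n) (h : ℝ) :
    Cube c h = (MeasurableEquiv.toLp 2 (Fin n → ℝ)).symm ⁻¹'
      (Set.univ.pi fun i => Icc (c i) (c i + h)) := by
  ext x
  simp [Cube, Set.mem_pi, Icc]

theorem measurableSet_cube (c : Rn n) (h : ℝ) : MeasurableSet (Cube c h) := by
  rw [cube_eq_preimage]
  exact (MeasurableEquiv.toLp 2 (Fin n → ℝ)).symm.measurable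
    (MeasurableSet.univ_pi fun i => measurableSet_Icc)

theorem volume_cube (c : Rn n) {h : ℝ} (hh : 0 ≤ h) :
    volume (Cube c h) = ENNReal.ofReal (h ^ n) := by
  rw [cube_eq_preimage,
    (EuclideanSpace.volume_preserving_symm_measurableEquiv_toLp (Fin n)).measure_preimage
      (MeasurableSet.univ_pi fun i => measurableSet_Icc).nullMeasurableSet,
    volume_pi_pi]
  simp only [Real.volume_Icc, add_sub_cancel_left]
  rw [Finset.prod_const, ENNReal.ofReal_pow hh]
  simp

theorem luxNorm_le_of_ae_abs_le {Φ : ℝ → ℝ} {c : Rn n} {h m δ : ℝ} {g : Rn n → ℝ}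
    (hh : 0 < h) (hm : 0 < m) (hδ : 0 < δ) (hΦ : ∀ t, 0 ≤ t → t ≤ δ → Φ t ≤ 1)
    (hg : ∀ᵐ x ∂volume.restrict (Cube c h), |g x| ≤ m) : luxNorm Φ c h g ≤ m / δ := by
  have hvol : (0 : ℝ) < h ^ n := by positivity
  refine luxNormOn_le ⟨div_pos hm hδ, ?_⟩
  rw [one_div, inv_mul_le_iff₀ hvol, mul_one]
  by_cases hi : IntegrableOn (fun x => Φ (|g x| / (m / δ))) (Cube c h)
  · have hle : ∀ᵐ x ∂volume.restrict (Cube c h), Φ (|g x| / (m / δ)) ≤ 1 :=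
      hg.mono fun x hx => hΦ _ (by positivity) <| by
        rwa [div_le_iff₀ (div_pos hm hδ), mul_div_cancel₀ _ hδ.ne']
    calc ∫ x in Cube c h, Φ (|g x| / (m / δ)) ≤ ∫ _ in Cube c h, (1 : ℝ) :=
          integral_mono_ae hi (integrableOn_const (by simp [volume_cube c hh.le])) hle
      _ = h ^ n := by
          rw [setIntegral_const, smul_eq_mul, mul_one, measureReal_def, volume_cube c hh.le,
            ENNReal.toReal_ofReal hvol.le]
  · rw [integral_undef hi]
    exact hvol.le

theorem luxNorm_toReal_fracOrliczMax_rpow_neg_le {β r h δ : ℝ} {Φ B : ℝ → ℝ}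
    {f : Rn n → ℝ} {c : Rn n} (hh : 0 < h) (hδ : 0 < δ) (hB : ∀ t, 0 ≤ t → t ≤ δ → B t ≤ 1)
    (hfin : ∀ᵐ x, fracOrliczMax β Φ f x < ⊤) (hpos : 0 < luxNorm Φ c h f) (hr : 0 ≤ r) :
    luxNorm B c h (fun x => (fracOrliczMax β Φ f x).toReal ^ (-r)) ≤
      ((h ^ n) ^ (β / n) * luxNorm Φ c h f) ^ (-r) / δ := by
  refine luxNorm_le_of_ae_abs_le hh (by positivity) hδ hB ?_
  filter_upwards [ae_restrict_of_ae hfin, ae_restrict_mem (measurableSet_cube c h)]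
    with x hx hxQ
  rw [abs_of_nonneg (Real.rpow_nonneg ENNReal.toReal_nonneg _)]
  refine Real.rpow_le_rpow_of_nonpos (by positivity) ?_ (neg_nonpos.mpr hr)
  rw [← ENNReal.ofReal_le_iff_le_toReal hx.ne]
  exact le_iSup₂_of_le c h (le_iSup₂_of_le hh hxQ le_rfl)

end Cube

theorem exists_pos_forall_le_one {B : ℝ → ℝ} (hc : ContinuousWithinAt B (Ici 0) 0)
    (h0 : B 0 = 0) : ∃ δ > 0, ∀ t, 0 ≤ t → t ≤ δ → B t ≤ 1 := by
  obtain ⟨δ, hδ, hsub⟩ := mem_nhdsGE_iff_exists_Icc_subset.mp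
    (hc.eventually (Iic_mem_nhds (h0 ▸ zero_lt_one)))
  exact ⟨δ, hδ, fun t ht₀ htδ => hsub ⟨ht₀, htδ⟩⟩

theorem sharp_example_bump_condition_general {n : ℕ} (α : ℝ)
    (k : ℕ) (hk : 1 < k)
    (B : ℝ → ℝ) (hB : IsYoung B)
    (u : Rn n → ℝ) (hu : ∀ x, 0 ≤ u x) (huloc : MeasureTheory.LocallyIntegrable u)
    (hfin : ∀ᵐ x, fracOrliczMax ((k : ℝ) * α)
      (fun t => t * Real.log (Real.exp 1 + t) ^ (2 * (k : ℝ) - 1)) u x < ⊤) :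
    let Φk : ℝ → ℝ := fun t => t * Real.log (Real.exp 1 + t) ^ (2 * (k : ℝ) - 1)
    let Ak : ℝ → ℝ := fun t => t ^ (k : ℝ) * Real.log (Real.exp 1 + t) ^ (2 * (k : ℝ) - 1)
    ∃ N : ℝ, ∀ (c₀ : Rn n) (h : ℝ), 0 < h →
      (h ^ n) ^ (α / (n : ℝ)) *
        luxNorm Ak c₀ h (fun x => u x ^ (1 / (k : ℝ))) *
        luxNorm B c₀ h
          (fun x => (fracOrliczMax ((k : ℝ) * α) Φk u x).toReal ^ (-(1 / (k : ℝ)))) ≤ N := by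
  intro Φk Ak
  have hk0 : k ≠ 0 := by omega
  have hp : (0 : ℝ) ≤ 2 * k - 1 := by
    have : (1 : ℝ) < k := by exact_mod_cast hk
    linarith
  obtain ⟨δ, hδ, hBδ⟩ := exists_pos_forall_le_one (hB.1 0 self_mem_Ici) hB.2.2.2.1
  set C : ℝ := (2 ^ (2 * (k : ℝ) - 1)) ^ (1 / (k : ℝ))
  refine ⟨C / δ, fun c h hh => ?_⟩
  set L := luxNorm Φk c h u
  set P := (h ^ n) ^ (α / (n : ℝ))
  have hA : luxNorm Ak c h (fun x => u x ^ (1 / (k : ℝ))) ≤ C * L ^ (1 / (k : ℝ)) :=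
    luxNormOn_LrLogLPow_rpow_inv_le (by positivity) hp hk0 hu
      huloc.aestronglyMeasurable.aemeasurable.restrict
  have hL0 : 0 ≤ L := luxNormOn_nonneg
  rcases hL0.eq_or_lt with hL | hL
  · have hA0 : luxNorm Ak c h (fun x => u x ^ (1 / (k : ℝ))) = 0 := by
      refine le_antisymm ?_ luxNormOn_nonneg
      rwa [← hL, Real.zero_rpow (by positivity), mul_zero] at hA
    rw [hA0, mul_zero, zero_mul]
    positivity
  have hBnorm : luxNorm B c h (fun x => (fracOrliczMax ((k : ℝ) * α) Φk u x).toReal ^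
      (-(1 / (k : ℝ)))) ≤ (P * L ^ (1 / (k : ℝ)))⁻¹ / δ := by
    have hexp : (h ^ n) ^ ((k : ℝ) * α / n * (1 / k)) = P := by
      congr 1
      field_simp
    convert luxNorm_toReal_fracOrliczMax_rpow_neg_le (r := 1 / (k : ℝ)) hh hδ hBδ hfin hL
      (by positivity) using 2
    rw [Real.rpow_neg (by positivity), Real.mul_rpow (by positivity) hL.le,
      ← Real.rpow_mul (by positivity), hexp]
  have hP : 0 < P := by positivity
  calc P * luxNorm Ak c h (fun x => u x ^ (1 / (k : ℝ))) * luxNorm B c h _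
      ≤ P * (C * L ^ (1 / (k : ℝ))) * ((P * L ^ (1 / (k : ℝ)))⁻¹ / δ) := by
        gcongr
        exact luxNormOn_nonneg
    _ = C / δ := by
        field_simp

/-- The pair `(u, M_{Φ_k, kα} u)` with `Φ_k(t) = t log(e+t)^{2k-1}`
satisfies the two-weight bump condition for `[b,I_α]` (with `p = q = k`) in which the
Young function is `A_k(t) = t^k log(e+t)^{2k-1}`, i.e. the log-bump with `δ = 0`. -/
theorem sharp_example_bump_condition {n : ℕ} (α : ℝ) (hα : 0 < α) (hαn : α < n)
    (k : ℕ) (hk : 1 < k) (hkn : (k : ℝ) < (n : ℝ) / α)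
    (B : ℝ → ℝ) (hB : IsYoung B)
    (u : Rn n → ℝ) (hu : ∀ x, 0 ≤ u x) (huloc : MeasureTheory.LocallyIntegrable u)
    (hfin : ∀ᵐ x, fracOrliczMax ((k : ℝ) * α)
      (fun t => t * Real.log (Real.exp 1 + t) ^ (2 * (k : ℝ) - 1)) u x < ⊤) :
    let Φk : ℝ → ℝ := fun t => t * Real.log (Real.exp 1 + t) ^ (2 * (k : ℝ) - 1)
    let Ak : ℝ → ℝ := fun t => t ^ (k : ℝ) * Real.log (Real.exp 1 + t) ^ (2 * (k : ℝ) - 1)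
    ∃ N : ℝ, ∀ (c₀ : Rn n) (h : ℝ), 0 < h →
      (h ^ n) ^ (α / (n : ℝ)) *
        luxNorm Ak c₀ h (fun x => u x ^ (1 / (k : ℝ))) *
        luxNorm B c₀ h
          (fun x => (fracOrliczMax ((k : ℝ) * α) Φk u x).toReal ^ (-(1 / (k : ℝ)))) ≤ N :=
  sharp_example_bump_condition_general α k hk B hB u hu huloc hfin

end Paper
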